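/- Let ω be a radial weight in the class D̂ and let α>0. Define μ(r)=ω(r)·ω̂(r)^{α−1} for r∈[0,1). Then μ is a radial weight belonging to D̂, and there exists a constant C≥1 (depending only on ω and α) such that C^{−1}·(ω_x)^α ≤ μ_x ≤ C·(ω_x)^α for all x≥1. -/

import Mathlib

open MeasureTheory Filter Set
open scoped ENNReal

noncomputable section

/-- `ω̂(r) = ∫_r^1 ω(s) ds`. -/
def omegaHat (ω : ℝ → ℝ) (r : ℝ) : ℝ := ∫ s in r..1, ω s

/-- A radial weight: nonnegative and Lebesgue integrable on `[0,1)`. -/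
def IsRadialWeight (ω : ℝ → ℝ) : Prop :=
  (∀ r ∈ Set.Ico (0:ℝ) 1, 0 ≤ ω r) ∧ MeasureTheory.IntegrableOn ω (Set.Ico 0 1)

/-- The class `D̂` of upper doubling radial weights. -/
def InDhat (ω : ℝ → ℝ) : Prop :=
  ∃ C > (0:ℝ), ∀ r ∈ Set.Ico (0:ℝ) 1, omegaHat ω r ≤ C * omegaHat ω ((1 + r) / 2)

/-- The class `Ď`. -/
def InDcheck (ω : ℝ → ℝ) : Prop :=
  ∃ K > (1:ℝ), ∃ C > (1:ℝ), ∀ r ∈ Set.Ico (0:ℝ) 1,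
    C * omegaHat ω (1 - (1 - r) / K) ≤ omegaHat ω r

/-- Moments `μ_x = ∫_0^1 r^x μ(r) dr`. -/
def momentW (μ : ℝ → ℝ) (x : ℝ) : ℝ := ∫ r in (0:ℝ)..1, r ^ x * μ r

/-- The coefficients `μ_{2k+1}` of the `A²_μ` pairing. -/
def momentCoeff (μ : ℝ → ℝ) : ℕ → ℝ := fun k => momentW μ (2 * (k:ℝ) + 1)

/-- The point `r e^{iθ}` of the circle of radius `r`. -/
def circlePt (r θ : ℝ) : ℂ := (r:ℂ) * Complex.exp ((θ:ℂ) * Complex.I)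

/-- Integral means `M_p(r,f)` (with values in `[0,∞]`). -/
def MpE (p r : ℝ) (f : ℂ → ℂ) : ℝ≥0∞ :=
  (ENNReal.ofReal (1 / (2 * Real.pi)) *
    ∫⁻ θ in Set.Ioo (0:ℝ) (2 * Real.pi), ENNReal.ofReal (‖f (circlePt r θ)‖ ^ p)) ^ (1 / p)

/-- Integral means of a `[0,∞]`-valued function. -/
def MpEE (p r : ℝ) (F : ℂ → ℝ≥0∞) : ℝ≥0∞ :=
  (ENNReal.ofReal (1 / (2 * Real.pi)) *
    ∫⁻ θ in Set.Ioo (0:ℝ) (2 * Real.pi), (F (circlePt r θ)) ^ p) ^ (1 / p)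

/-- The norm of the mixed norm space `L^{p,q}_ω`. -/
def LpqNormE (ω : ℝ → ℝ) (p q : ℝ) (f : ℂ → ℂ) : ℝ≥0∞ :=
  (∫⁻ r in Set.Ioo (0:ℝ) 1, (MpE p r f) ^ q * ENNReal.ofReal (r * ω r)) ^ (1 / q)

/-- The `L^{p,q}_ω` norm of a `[0,∞]`-valued function. -/
def LpqNormEE (ω : ℝ → ℝ) (p q : ℝ) (F : ℂ → ℝ≥0∞) : ℝ≥0∞ :=
  (∫⁻ r in Set.Ioo (0:ℝ) 1, (MpEE p r F) ^ q * ENNReal.ofReal (r * ω r)) ^ (1 / q)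

/-- The norm of `A^{p,∞}_ω` : `sup_{0 ≤ r < 1} M_p(r,f) ω̂(r)`. -/
def ApInfNormE (ω : ℝ → ℝ) (p : ℝ) (f : ℂ → ℂ) : ℝ≥0∞ :=
  ⨆ r ∈ Set.Ico (0:ℝ) 1, MpE p r f * ENNReal.ofReal (omegaHat ω r)

/-- Membership in the mixed norm space `A^{p,q}_ω`. -/
def InApq (ω : ℝ → ℝ) (p q : ℝ) (f : ℂ → ℂ) : Prop :=
  DifferentiableOn ℂ f (Metric.ball 0 1) ∧ LpqNormE ω p q f < ⊤

/-- Membership in `A^{p,∞}_ω`. -/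
def InApInf (ω : ℝ → ℝ) (p : ℝ) (f : ℂ → ℂ) : Prop :=
  DifferentiableOn ℂ f (Metric.ball 0 1) ∧ ApInfNormE ω p f < ⊤

/-- Taylor coefficient of `f` at `0`. -/
def taylorCoeff (f : ℂ → ℂ) (n : ℕ) : ℂ := iteratedDeriv n f 0 / (n.factorial : ℂ)

/-- The pairing `⟨f,g⟩ = lim_{r→1⁻} ∑_k f̂(k) conj(ĝ(k)) c(k) r^k` exists and equals `l`. -/
def HasPairingC (c : ℕ → ℝ) (f g : ℂ → ℂ) (l : ℂ) : Prop :=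
  (∀ r ∈ Set.Ico (0:ℝ) 1, Summable (fun k : ℕ =>
    taylorCoeff f k * (starRingEnd ℂ) (taylorCoeff g k) * ((c k : ℝ) : ℂ) * ((r:ℂ)) ^ k)) ∧
  Filter.Tendsto (fun r : ℝ => ∑' k : ℕ,
    taylorCoeff f k * (starRingEnd ℂ) (taylorCoeff g k) * ((c k : ℝ) : ℂ) * ((r:ℂ)) ^ k)
    (nhdsWithin 1 (Set.Iio 1)) (nhds l)

/-- `L` is linear on the functions satisfying `P`. -/
def IsLinearOn (P : (ℂ → ℂ) → Prop) (L : (ℂ → ℂ) → ℂ) : Prop :=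
  (∀ f g : ℂ → ℂ, P f → P g → L (f + g) = L f + L g) ∧
  (∀ (c : ℂ) (f : ℂ → ℂ), P f → L (c • f) = c * L f)

/-- Dilation `f_r(z) = f(rz)`. -/
def dilateF (f : ℂ → ℂ) (r : ℝ) : ℂ → ℂ := fun z => f ((r:ℂ) * z)

/-- The BMOA norm `|f(0)| + sup_{a∈D} sup_{0<r<1} M₂(r, f∘φ_a - f(a))`. -/
def BMOANormE (f : ℂ → ℂ) : ℝ≥0∞ :=
  ENNReal.ofReal ‖f 0‖ +
    ⨆ a ∈ Metric.ball (0:ℂ) 1, ⨆ r ∈ Set.Ioo (0:ℝ) 1,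
      MpE 2 r (fun z => f ((a - z) / (1 - (starRingEnd ℂ) a * z)) - f a)

/-- The Bloch norm `|f(0)| + sup_{z∈D} (1-|z|²)|f'(z)|`. -/
def BlochNormE (f : ℂ → ℂ) : ℝ≥0∞ :=
  ENNReal.ofReal ‖f 0‖ +
    ⨆ z ∈ Metric.ball (0:ℂ) 1, ENNReal.ofReal ((1 - ‖z‖ ^ 2) * ‖deriv f z‖)

/-- The norm of `X(q,ω)`: `(∫_0^1 ‖f_r‖_X^q ω(r) dr)^{1/q}`. -/
def XqNormE (Xnorm : (ℂ → ℂ) → ℝ≥0∞) (ω : ℝ → ℝ) (q : ℝ) (f : ℂ → ℂ) : ℝ≥0∞ :=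
  (∫⁻ r in Set.Ioo (0:ℝ) 1, (Xnorm (dilateF f r)) ^ q * ENNReal.ofReal (ω r)) ^ (1 / q)

/-- The norm of `X(∞,ω)`: `sup_{0<r<1} ‖f_r‖_X ω̂(r)`. -/
def XInfNormE (Xnorm : (ℂ → ℂ) → ℝ≥0∞) (ω : ℝ → ℝ) (f : ℂ → ℂ) : ℝ≥0∞ :=
  ⨆ r ∈ Set.Ioo (0:ℝ) 1, Xnorm (dilateF f r) * ENNReal.ofReal (omegaHat ω r)

/-- The standard radial weight `ν_β(r) = (β+1)(1-r²)^β`. -/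
def nuWeight (β : ℝ) : ℝ → ℝ := fun r => (β + 1) * (1 - r ^ 2) ^ β

/-- The Bergman reproducing kernel `B^ω_a(z) = ∑ (z conj a)^n / (2 ω_{2n+1})`. -/
def bergmanKernel (ω : ℝ → ℝ) (a z : ℂ) : ℂ :=
  ∑' n : ℕ, (z * (starRingEnd ℂ) a) ^ n / (2 * ((momentW ω (2 * (n:ℝ) + 1) : ℝ) : ℂ))

/-- The Bergman projection (`dA` is normalized area measure). -/
def PomegaProj (ω : ℝ → ℝ) (f : ℂ → ℂ) (z : ℂ) : ℂ :=
  (Real.pi)⁻¹ • ∫ ζ in Metric.ball (0:ℂ) 1,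
    f ζ * (starRingEnd ℂ) (bergmanKernel ω z ζ) * ((ω ‖ζ‖ : ℝ) : ℂ)

/-- The maximal Bergman projection applied to `|f|`, with values in `[0,∞]`. -/
def PomegaPlusL (ω : ℝ → ℝ) (f : ℂ → ℂ) (z : ℂ) : ℝ≥0∞ :=
  ∫⁻ ζ in Metric.ball (0:ℂ) 1,
    ENNReal.ofReal (‖f ζ‖ * ‖bergmanKernel ω z ζ‖ * ω ‖ζ‖ / Real.pi)

/-- The Hardy `H¹` norm. -/
def H1NormE (f : ℂ → ℂ) : ℝ≥0∞ := ⨆ r ∈ Set.Ioo (0:ℝ) 1, MpE 1 r f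

/-- `r_n = inf{ r ∈ [0,1) : ω̂(r) = ω̂(0) K^{-n} }`. -/
def rSeq (ω : ℝ → ℝ) (K : ℝ) (n : ℕ) : ℝ :=
  sInf {r | r ∈ Set.Ico (0:ℝ) 1 ∧ omegaHat ω r = omegaHat ω 0 * K ^ (-(n:ℝ))}

/-- `M_n = ⌊1/(1-r_n)⌋`. -/
def MSeq (ω : ℝ → ℝ) (K : ℝ) (n : ℕ) : ℕ := ⌊1 / (1 - rSeq ω K n)⌋₊

/-- Weighted Hadamard product of a polynomial with an analytic function:
`z ↦ ∑_j c(j) P̂(j) ĝ(j) z^j`. -/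
def hadamardPolyC (c : ℕ → ℂ) (P : Polynomial ℂ) (g : ℂ → ℂ) : ℂ → ℂ :=
  fun z => ∑ j ∈ Finset.range (P.natDegree + 1), c j * P.coeff j * taylorCoeff g j * z ^ j

/-- An admissible Banach space of analytic functions on the unit disc, given by a
carrier set and a norm function. -/
structure AdmissibleSpace where
  carrier : Set (ℂ → ℂ)
  nrm : (ℂ → ℂ) → ℝ
  mem_analytic : ∀ f ∈ carrier, DifferentiableOn ℂ f (Metric.ball 0 1)
  zero_mem : (0 : ℂ → ℂ) ∈ carrier
  add_mem : ∀ f g : ℂ → ℂ, f ∈ carrier → g ∈ carrier → f + g ∈ carrier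
  smul_mem : ∀ (c : ℂ) (f : ℂ → ℂ), f ∈ carrier → c • f ∈ carrier
  nrm_nonneg : ∀ f ∈ carrier, 0 ≤ nrm f
  nrm_eq_zero : ∀ f ∈ carrier, nrm f = 0 → ∀ z ∈ Metric.ball (0:ℂ) 1, f z = 0
  nrm_add : ∀ f g : ℂ → ℂ, f ∈ carrier → g ∈ carrier → nrm (f + g) ≤ nrm f + nrm g
  nrm_smul : ∀ (c : ℂ) (f : ℂ → ℂ), f ∈ carrier → nrm (c • f) = ‖c‖ * nrm f
  complete : ∀ u : ℕ → (ℂ → ℂ), (∀ n, u n ∈ carrier) →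
    (∀ ε : ℝ, 0 < ε → ∃ N : ℕ, ∀ m ≥ N, ∀ n ≥ N, nrm (u m - u n) < ε) →
    ∃ f ∈ carrier, Filter.Tendsto (fun n => nrm (u n - f)) Filter.atTop (nhds 0)
  norm_conv_implies_ucc : ∀ (u : ℕ → (ℂ → ℂ)) (f : ℂ → ℂ),
    (∀ n, u n ∈ carrier) → f ∈ carrier →
    Filter.Tendsto (fun n => nrm (u n - f)) Filter.atTop (nhds 0) →
    ∀ Kc : Set ℂ, Kc ⊆ Metric.ball 0 1 → IsCompact Kc →
      TendstoUniformlyOn (fun n => u n) f Filter.atTop Kc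
  ucc_implies_norm_conv : ∀ R : ℝ, 1 < R → ∀ (u : ℕ → (ℂ → ℂ)) (f : ℂ → ℂ),
    (∀ n, u n ∈ carrier ∧ DifferentiableOn ℂ (u n) (Metric.ball 0 R)) →
    DifferentiableOn ℂ f (Metric.ball 0 R) →
    (∀ Kc : Set ℂ, Kc ⊆ Metric.ball (0:ℂ) R → IsCompact Kc →
      TendstoUniformlyOn (fun n => u n) f Filter.atTop Kc) →
    f ∈ carrier ∧ Filter.Tendsto (fun n => nrm (u n - f)) Filter.atTop (nhds 0)
  dilation_bound : ∃ C > (0:ℝ), ∀ f ∈ carrier, ∀ ζ : ℂ, ‖ζ‖ ≤ 1 →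
    (fun z => f (ζ * z)) ∈ carrier ∧ nrm (fun z => f (ζ * z)) ≤ C * nrm f

/-- The operator `T_p = I^{ν_{1/p-2}}`. -/
def TpOp (p : ℝ) (g : ℂ → ℂ) : ℂ → ℂ :=
  fun z => ∑' k : ℕ,
    taylorCoeff g k * ((momentW (nuWeight (1 / p - 2)) (2 * (k:ℝ) + 1) : ℝ) : ℂ) * z ^ k

/-- Membership in the Bloch space. -/
def InBloch (g : ℂ → ℂ) : Prop :=
  DifferentiableOn ℂ g (Metric.ball 0 1) ∧ BlochNormE g < ⊤

open Classical in
/-- The norm of the space `X_p = T_p(B)`, normed so that `T_p` is an isometry. -/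
def XpNormE (p : ℝ) (h : ℂ → ℂ) : ℝ≥0∞ :=
  if H : ∃ g : ℂ → ℂ, InBloch g ∧ Set.EqOn h (TpOp p g) (Metric.ball 0 1)
  then BlochNormE H.choose else ⊤

/-- The polynomial `V_n ∗ g` where `V_n(z) = ∑_{j=2^{n-1}}^{2^{n+1}-1} ψ(j/2^{n-1}) z^j`
and `ψ(t) = Ψ(t/2) - Ψ(t)`. -/
def VnStar (Ψ : ℝ → ℝ) (n : ℕ) (g : ℂ → ℂ) : ℂ → ℂ :=
  fun z => ∑ j ∈ Finset.Icc (2 ^ (n - 1) : ℕ) (2 ^ (n + 1) - 1 : ℕ),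
    (((Ψ ((j:ℝ) / 2 ^ n) - Ψ ((j:ℝ) / 2 ^ (n - 1))) : ℝ) : ℂ) * taylorCoeff g j * z ^ j

/-- `D^ω(V_n ∗ g)`, where `D^ω h(z) = ∑ ĥ(k) z^k/(2ω_{2k+1})`. -/
def DVnStar (Ψ : ℝ → ℝ) (ω : ℝ → ℝ) (n : ℕ) (g : ℂ → ℂ) : ℂ → ℂ :=
  fun z => ∑ j ∈ Finset.Icc (2 ^ (n - 1) : ℕ) (2 ^ (n + 1) - 1 : ℕ),
    (((Ψ ((j:ℝ) / 2 ^ n) - Ψ ((j:ℝ) / 2 ^ (n - 1))) : ℝ) : ℂ) * taylorCoeff g j * z ^ j /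
      (2 * ((momentW ω (2 * (j:ℝ) + 1) : ℝ) : ℂ))

/-- `J_ω(t) = ∫_0^t ds/(ω̂(s)(1-s))`. -/
def Jomega (ω : ℝ → ℝ) (t : ℝ) : ℝ := ∫ s in (0:ℝ)..t, 1 / (omegaHat ω s * (1 - s))

/-!
The function `ω̂` is absolutely continuous with `ω̂' = -ω` almost everywhere. On `[a, b]` with
`b < 1`, where `ω̂` stays away from `0`, the chain rule therefore gives
`∫ₐᵇ ω ω̂ ^ (α - 1) = (ω̂(a) ^ α - ω̂(b) ^ α) / α`, and letting `b → 1` yields `μ̂ = ω̂ ^ α / α`.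
Hence `μ` is integrable, and it inherits the doubling condition with constant `C ^ α`.

For a weight `ν ∈ D̂` and `2x ≤ 2 ^ k ≤ 4x`, the moment `ν_x` is comparable to `ν̂(1 - 2⁻ᵏ)`: from
below, keep only the integral over `[1 - 2⁻ᵏ, 1)`, where `r ^ x ≥ 1/2`; from above, split
`[0, 1 - 2⁻ᵏ]` at the points `1 - 2⁻ⁿ`, and on the `n`-th piece play the decay
`r ^ x ≤ exp (-2 ^ (k - n) / 8)` against the growth `C ^ (k - n)` that iterating the doubling
condition allows for `ν̂`. Applied to `ν = ω` and `ν = μ` this gives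
`μ_x ≍ ω̂(1 - 2⁻ᵏ) ^ α ≍ (ω_x) ^ α`.
-/

theorem LipschitzOnWith.comp_absolutelyContinuousOnInterval {g f : ℝ → ℝ} {K : NNReal}
    {s : Set ℝ} {a b : ℝ} (hg : LipschitzOnWith K g s) (hf : AbsolutelyContinuousOnInterval f a b)
    (hfs : MapsTo f (uIcc a b) s) : AbsolutelyContinuousOnInterval (g ∘ f) a b := by
  unfold AbsolutelyContinuousOnInterval at hf ⊢
  apply squeeze_zero' (Eventually.of_forall fun _ ↦ Finset.sum_nonneg fun _ _ ↦ dist_nonneg)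
    ?_ (by simpa using hf.const_mul (K : ℝ))
  rw [eventually_inf_principal]
  filter_upwards with E hE
  rw [Finset.mul_sum]
  gcongr with i hi
  exact hg.dist_le_mul _ (hfs (hE.1 i hi).1) _ (hfs (hE.1 i hi).2)

theorem Real.exists_lipschitzOnWith_rpow {c d : ℝ} (hc : 0 < c) (α : ℝ) :
    ∃ K, LipschitzOnWith K (fun y : ℝ ↦ y ^ α) (Icc c d) :=
  (contDiffOn_id.rpow_const_of_ne (fun _ hy ↦ (hc.trans_le hy.1).ne')).exists_lipschitzOnWith
    one_ne_zero (convex_Icc c d) isCompact_Icc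

theorem Real.one_sub_rpow_le_exp {u x : ℝ} (hu : u ≤ 1) (hx : 0 ≤ x) :
    (1 - u) ^ x ≤ Real.exp (-(u * x)) := by
  rw [neg_mul_eq_neg_mul, Real.exp_mul]
  exact Real.rpow_le_rpow (by linarith) (Real.one_sub_le_exp_neg u) hx

theorem Nat.sq_le_two_mul_two_pow (j : ℕ) : j ^ 2 ≤ 2 * 2 ^ j := by
  induction j with
  | zero => norm_num
  | succ j ih =>
    rcases lt_or_ge j 3 with hj | hj
    · interval_cases j <;> norm_num
    · nlinarith [pow_succ 2 j]

theorem Real.pow_mul_exp_neg_two_pow_le {C : ℝ} (hC : 0 < C) (j : ℕ) :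
    C ^ j * Real.exp (-2 ^ j / 8) ≤ Real.exp (4 * Real.log (2 * C) ^ 2) * (1 / 2) ^ j := by
  have hL : (2 * C) ^ j = Real.exp (j * Real.log (2 * C)) := by
    rw [← Real.log_pow, Real.exp_log (by positivity)]
  have hj : ((j ^ 2 : ℕ) : ℝ) ≤ ((2 * 2 ^ j : ℕ) : ℝ) := by exact_mod_cast j.sq_le_two_mul_two_pow
  push_cast at hj
  -- with `L = log (2C)`: `j L ≤ j² / 16 + 4 L² ≤ 2 ^ j / 8 + 4 L²`
  have hkey : j * Real.log (2 * C) - 2 ^ j / 8 ≤ 4 * Real.log (2 * C) ^ 2 := by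
    nlinarith [sq_nonneg ((j : ℝ) / 4 - 2 * Real.log (2 * C))]
  calc C ^ j * Real.exp (-2 ^ j / 8)
      = Real.exp (j * Real.log (2 * C) - 2 ^ j / 8) * (1 / 2) ^ j := by
        rw [Real.exp_sub, ← hL, div_pow, one_pow, mul_pow, neg_div, Real.exp_neg]
        field_simp
    _ ≤ Real.exp (4 * Real.log (2 * C) ^ 2) * (1 / 2) ^ j := by gcongr

theorem sum_range_half_pow_sub_le_one (k : ℕ) :
    ∑ n ∈ Finset.range k, (1 / 2 : ℝ) ^ (k - n) ≤ 1 := by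
  rw [← Finset.sum_range_reflect]
  calc ∑ j ∈ Finset.range k, (1 / 2 : ℝ) ^ (k - (k - 1 - j))
      = 1 / 2 * ∑ j ∈ Finset.range k, (1 / 2 : ℝ) ^ j := by
        rw [Finset.mul_sum]
        refine Finset.sum_congr rfl fun j hj ↦ ?_
        rw [← pow_succ']
        congr 1
        have := Finset.mem_range.1 hj
        omega
    _ ≤ 1 / 2 * 2 := by gcongr; exact sum_geometric_two_le k
    _ = 1 := by norm_num

theorem exists_two_pow_mem_Icc {y : ℝ} (hy : 1 ≤ y) : ∃ k : ℕ, 2 * y ≤ 2 ^ k ∧ 2 ^ k ≤ 4 * y := by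
  obtain ⟨n, hn, hn'⟩ := exists_nat_pow_near (by linarith : 1 ≤ 2 * y) (by norm_num : (1:ℝ) < 2)
  exact ⟨n + 1, hn'.le, by rw [pow_succ]; linarith⟩

theorem exists_comparable_rpow {α A B : ℝ} (hα : 0 < α) (hA : 1 ≤ A) (hB : 1 ≤ B) :
    ∃ C : ℝ, 1 ≤ C ∧ ∀ s w m : ℝ, 0 ≤ s → s ≤ A * w → w ≤ A * s →
      s ^ α / α ≤ B * m → m ≤ B * (s ^ α / α) → C⁻¹ * w ^ α ≤ m ∧ m ≤ C * w ^ α := by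
  have hAα : 1 ≤ A ^ α := Real.one_le_rpow hA hα.le
  have hαα : 1 ≤ α + α⁻¹ := by
    rcases le_total 1 α with h | h
    · linarith [inv_pos.2 hα]
    · linarith [one_le_inv_iff₀.2 ⟨hα, h⟩]
  have hC : 1 ≤ B * A ^ α * (α + α⁻¹) := one_le_mul_of_one_le_of_one_le
    (one_le_mul_of_one_le_of_one_le hB hAα) hαα
  refine ⟨_, hC, fun s w m hs hsw hws hsm hms ↦ ⟨?_, ?_⟩⟩
  · have hw : w ^ α ≤ A ^ α * s ^ α := by
      rw [← Real.mul_rpow (by linarith) hs]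
      exact Real.rpow_le_rpow (by nlinarith) hws hα.le
    have hm : 0 ≤ m := nonneg_of_mul_nonneg_right
      ((div_nonneg (Real.rpow_nonneg hs α) hα.le).trans hsm) (by linarith)
    rw [div_le_iff₀ hα] at hsm
    rw [inv_mul_le_iff₀ (by linarith)]
    calc w ^ α ≤ A ^ α * (B * m * α) := hw.trans (by gcongr)
      _ = B * A ^ α * α * m := by ring
      _ ≤ B * A ^ α * (α + α⁻¹) * m := by
        have := inv_pos.2 hα
        gcongr
        linarith
  · have hs' : s ^ α ≤ A ^ α * w ^ α := by
      rw [← Real.mul_rpow (by linarith) (by nlinarith)]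
      exact Real.rpow_le_rpow hs hsw hα.le
    calc m ≤ B * (s ^ α / α) := hms
      _ ≤ B * (A ^ α * w ^ α / α) := by gcongr
      _ = B * A ^ α * α⁻¹ * w ^ α := by ring
      _ ≤ B * A ^ α * (α + α⁻¹) * w ^ α := by
        have : 0 ≤ w ^ α := Real.rpow_nonneg (by nlinarith) α
        gcongr
        linarith

def dyadicRadius (n : ℕ) : ℝ := 1 - (1 / 2) ^ n

theorem dyadicRadius_zero : dyadicRadius 0 = 0 := by simp [dyadicRadius]

theorem dyadicRadius_succ (n : ℕ) : dyadicRadius (n + 1) = (1 + dyadicRadius n) / 2 := by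
  simp only [dyadicRadius]; ring

theorem dyadicRadius_mem_Ico (n : ℕ) : dyadicRadius n ∈ Ico (0:ℝ) 1 :=
  ⟨sub_nonneg.2 (pow_le_one₀ (by norm_num) (by norm_num)), sub_lt_self _ (by positivity)⟩

theorem tendsto_dyadicRadius : Tendsto dyadicRadius atTop (nhds 1) :=
  show Tendsto (fun n : ℕ ↦ 1 - (1 / 2 : ℝ) ^ n) atTop (nhds 1) by
    simpa using (tendsto_pow_atTop_nhds_zero_of_lt_one (r := (1 / 2 : ℝ))
      (by norm_num) (by norm_num)).const_sub 1

theorem dyadicRadius_mono : Monotone dyadicRadius := fun _ _ h ↦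
  sub_le_sub_left (pow_le_pow_of_le_one (by norm_num) (by norm_num) h) 1

theorem omegaHat_eq_neg_primitive (ω : ℝ → ℝ) : omegaHat ω = -fun x ↦ ∫ t in (1:ℝ)..x, ω t := by
  ext x
  exact intervalIntegral.integral_symm 1 x

namespace IsRadialWeight

variable {ω : ℝ → ℝ} (hω : IsRadialWeight ω)
include hω

theorem intervalIntegrable {a b : ℝ} (ha : a ∈ Icc (0:ℝ) 1) (hb : b ∈ Icc (0:ℝ) 1) :
    IntervalIntegrable ω volume a b :=
  (((integrableOn_Icc_iff_integrableOn_Ico).2 hω.2).mono_set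
    (uIcc_subset_Icc ha hb)).intervalIntegrable

theorem ae_nonneg : ∀ᵐ t, t ∈ Icc (0:ℝ) 1 → 0 ≤ ω t := by
  filter_upwards [Measure.ae_ne volume (1:ℝ)] with t ht1 ht
  exact hω.1 t ⟨ht.1, lt_of_le_of_ne ht.2 ht1⟩

theorem omegaHat_sub_omegaHat {a b : ℝ} (ha : a ∈ Icc (0:ℝ) 1) (hb : b ∈ Icc (0:ℝ) 1) :
    omegaHat ω a - omegaHat ω b = ∫ t in a..b, ω t :=
  sub_eq_of_eq_add (intervalIntegral.integral_add_adjacent_intervals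
    (hω.intervalIntegrable ha hb) (hω.intervalIntegrable hb ⟨zero_le_one, le_rfl⟩)).symm

theorem integral_nonneg {a b : ℝ} (ha : 0 ≤ a) (hab : a ≤ b) (hb : b ≤ 1) :
    0 ≤ ∫ t in a..b, ω t :=
  intervalIntegral.integral_nonneg_of_ae_restrict hab <|
    (ae_restrict_iff' measurableSet_Icc).2 <| hω.ae_nonneg.mono fun _ ht hmem ↦
      ht ⟨ha.trans hmem.1, hmem.2.trans hb⟩

theorem omegaHat_nonneg {r : ℝ} (hr : r ∈ Icc (0:ℝ) 1) : 0 ≤ omegaHat ω r :=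
  hω.integral_nonneg hr.1 hr.2 le_rfl

theorem omegaHat_antitoneOn : AntitoneOn (omegaHat ω) (Icc 0 1) := fun _ ha _ hb hab ↦
  sub_nonneg.1 <| hω.omegaHat_sub_omegaHat ha hb ▸ hω.integral_nonneg ha.1 hab hb.2

theorem absolutelyContinuousOnInterval_omegaHat :
    AbsolutelyContinuousOnInterval (omegaHat ω) 0 1 :=
  omegaHat_eq_neg_primitive ω ▸ ((hω.intervalIntegrable ⟨le_rfl, zero_le_one⟩
    ⟨zero_le_one, le_rfl⟩).absolutelyContinuousOnInterval_intervalIntegral (by simp)).neg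

theorem continuousOn_omegaHat : ContinuousOn (omegaHat ω) (Icc 0 1) := by
  simpa [uIcc_of_le zero_le_one] using hω.absolutelyContinuousOnInterval_omegaHat.continuousOn

theorem ae_hasDerivAt_omegaHat : ∀ᵐ t, t ∈ Icc (0:ℝ) 1 → HasDerivAt (omegaHat ω) (-ω t) t := by
  filter_upwards [(hω.intervalIntegrable ⟨le_rfl, zero_le_one⟩
    ⟨zero_le_one, le_rfl⟩).ae_hasDerivAt_integral] with t ht hmem
  rw [uIcc_of_le zero_le_one] at ht
  exact omegaHat_eq_neg_primitive ω ▸ (ht hmem 1 (by simp)).neg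

variable {α : ℝ} (hpos : ∀ r ∈ Ico (0:ℝ) 1, 0 < omegaHat ω r)
include hpos

theorem integral_mul_omegaHat_rpow (hα : α ≠ 0) {a b : ℝ} (ha : 0 ≤ a) (hab : a ≤ b)
    (hb : b < 1) :
    ∫ t in a..b, ω t * omegaHat ω t ^ (α - 1) = (omegaHat ω a ^ α - omegaHat ω b ^ α) / α := by
  have hIcc : Icc a b ⊆ Icc 0 1 := Icc_subset_Icc ha hb.le
  -- `ω̂` stays in `[ω̂ b, ω̂ a]`, away from `0`, where `y ↦ y ^ α` is Lipschitz
  obtain ⟨K, hK⟩ := Real.exists_lipschitzOnWith_rpow (hpos b ⟨ha.trans hab, hb⟩)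
    (d := omegaHat ω a) α
  have hAC : AbsolutelyContinuousOnInterval (fun t ↦ omegaHat ω t ^ α) a b := by
    refine hK.comp_absolutelyContinuousOnInterval
      (hω.absolutelyContinuousOnInterval_omegaHat.mono ?_) fun t ht ↦ ?_
    · rw [uIcc_of_le hab, uIcc_of_le zero_le_one]; exact hIcc
    · rw [uIcc_of_le hab] at ht
      exact ⟨hω.omegaHat_antitoneOn (hIcc ht) (hIcc ⟨hab, le_rfl⟩) ht.2,
        hω.omegaHat_antitoneOn (hIcc ⟨le_rfl, hab⟩) (hIcc ht) ht.1⟩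
  have hderiv : ∀ᵐ t, t ∈ uIoc a b →
      deriv (fun t ↦ omegaHat ω t ^ α) t = -α * (ω t * omegaHat ω t ^ (α - 1)) := by
    filter_upwards [hω.ae_hasDerivAt_omegaHat] with t ht hmem
    rw [uIoc_of_le hab] at hmem
    have hpos_t := hpos t ⟨ha.trans hmem.1.le, hmem.2.trans_lt hb⟩
    rw [((ht (hIcc (Ioc_subset_Icc_self hmem))).rpow_const (Or.inl hpos_t.ne')).deriv]
    ring
  have h := hAC.integral_deriv_eq_sub
  rw [intervalIntegral.integral_congr_ae hderiv, intervalIntegral.integral_const_mul] at h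
  field_simp
  linarith

theorem integrableOn_mul_omegaHat_rpow (hα : 0 < α) :
    IntegrableOn (fun t ↦ ω t * omegaHat ω t ^ (α - 1)) (Ico 0 1) := by
  have hIcc : ∀ n, Icc 0 (dyadicRadius n) ⊆ Ico 0 1 := fun n ↦
    Icc_subset_Ico_right (dyadicRadius_mem_Ico n).2
  have hint : ∀ n, IntegrableOn (fun t ↦ ω t * omegaHat ω t ^ (α - 1)) (Icc 0 (dyadicRadius n)) :=
    fun n ↦ (hω.2.mono_set (hIcc n)).mul_continuousOn
      ((hω.continuousOn_omegaHat.mono ((hIcc n).trans Ico_subset_Icc_self)).rpow_const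
        fun t ht ↦ Or.inl (hpos t (hIcc n ht)).ne') isCompact_Icc
  refine (integrableOn_Icc_iff_integrableOn_Ico).1 <| (integrableOn_Icc_iff_integrableOn_Ioc).2 <|
    integrableOn_Ioc_of_intervalIntegral_norm_bounded (I := omegaHat ω 0 ^ α / α)
      (fun n ↦ (hint n).mono_set Ioc_subset_Icc_self) tendsto_const_nhds tendsto_dyadicRadius
      (Eventually.of_forall fun n ↦ ?_)
  have hnonneg : ∀ t ∈ Ioc 0 (dyadicRadius n), 0 ≤ ω t * omegaHat ω t ^ (α - 1) := fun t ht ↦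
    have ht' := hIcc n (Ioc_subset_Icc_self ht)
    mul_nonneg (hω.1 t ht') (Real.rpow_nonneg (hpos t ht').le _)
  obtain ⟨hn₀, hn₁⟩ := dyadicRadius_mem_Ico n
  rw [setIntegral_congr_fun measurableSet_Ioc fun t ht ↦ Real.norm_of_nonneg (hnonneg t ht),
    ← intervalIntegral.integral_of_le hn₀,
    hω.integral_mul_omegaHat_rpow hpos hα.ne' le_rfl hn₀ hn₁]
  have := Real.rpow_nonneg (hω.omegaHat_nonneg ⟨hn₀, hn₁.le⟩) α
  gcongr
  linarith

theorem omegaHat_mul_omegaHat_rpow (hα : 0 < α) {r : ℝ} (hr : r ∈ Ico (0:ℝ) 1) :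
    omegaHat (fun t ↦ ω t * omegaHat ω t ^ (α - 1)) r = omegaHat ω r ^ α / α := by
  have hIcc : Icc r 1 ⊆ Icc 0 1 := Icc_subset_Icc_left hr.1
  have hcont_lhs :
      ContinuousOn (fun b ↦ ∫ t in r..b, ω t * omegaHat ω t ^ (α - 1)) (Icc r 1) := by
    have hint : IntegrableOn (fun t ↦ ω t * omegaHat ω t ^ (α - 1)) (uIcc r 1) := by
      rw [uIcc_of_le hr.2.le]
      exact (integrableOn_Icc_iff_integrableOn_Ico).2
        ((hω.integrableOn_mul_omegaHat_rpow hpos hα).mono_set (Ico_subset_Ico_left hr.1))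
    simpa [uIcc_of_le hr.2.le] using intervalIntegral.continuousOn_primitive_interval hint
  have hcont_rhs :
      ContinuousOn (fun b ↦ (omegaHat ω r ^ α - omegaHat ω b ^ α) / α) (Icc r 1) :=
    (continuousOn_const.sub ((hω.continuousOn_omegaHat.mono hIcc).rpow_const
      fun _ _ ↦ Or.inr hα.le)).div_const α
  have heq := EqOn.of_subset_closure
    (fun b hb ↦ hω.integral_mul_omegaHat_rpow hpos hα.ne' hr.1 hb.1 hb.2)
    hcont_lhs hcont_rhs Ico_subset_Icc_self (closure_Ico hr.2.ne).ge ⟨hr.2.le, le_rfl⟩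
  simpa [omegaHat, hα.ne'] using heq

end IsRadialWeight

theorem InDhat.of_omegaHat_eq_rpow_div {ω ν : ℝ → ℝ} {α : ℝ} (hD : InDhat ω) (hα : 0 < α)
    (hnn : ∀ r ∈ Ico (0:ℝ) 1, 0 ≤ omegaHat ω r)
    (h : ∀ r ∈ Ico (0:ℝ) 1, omegaHat ν r = omegaHat ω r ^ α / α) : InDhat ν := by
  obtain ⟨C, hC, hDC⟩ := hD
  refine ⟨C ^ α, Real.rpow_pos_of_pos hC α, fun r hr ↦ ?_⟩
  have hmid : (1 + r) / 2 ∈ Ico (0:ℝ) 1 := ⟨by linarith [hr.1], by linarith [hr.2]⟩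
  rw [h r hr, h _ hmid, mul_div_assoc', ← Real.mul_rpow hC.le (hnn _ hmid)]
  gcongr
  · exact hnn r hr
  · exact hDC r hr

theorem half_le_dyadicRadius_rpow {x : ℝ} (hx : 1 ≤ x) {k : ℕ} (hk : 2 * x ≤ 2 ^ k) :
    1 / 2 ≤ dyadicRadius k ^ x := by
  have hbern := one_add_mul_self_le_rpow_one_add
    (by linarith [pow_le_one₀ (n := k) (by norm_num : (0:ℝ) ≤ 1 / 2) (by norm_num)] :
      -1 ≤ -(1 / 2 : ℝ) ^ k) hx
  rw [← sub_eq_add_neg] at hbern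
  have : x * (1 / 2) ^ k ≤ 1 / 2 := by
    rw [div_pow, one_pow, mul_one_div, div_le_iff₀ (by positivity)]
    linarith
  simp only [dyadicRadius]
  linarith

theorem omegaHat_dyadicRadius_le {ω : ℝ → ℝ} {C : ℝ} (hC : 0 ≤ C)
    (hD : ∀ r ∈ Ico (0:ℝ) 1, omegaHat ω r ≤ C * omegaHat ω ((1 + r) / 2)) (n m : ℕ) :
    omegaHat ω (dyadicRadius n) ≤ C ^ m * omegaHat ω (dyadicRadius (n + m)) := by
  induction m with
  | zero => simp
  | succ m ih =>
    calc omegaHat ω (dyadicRadius n) ≤ C ^ m * omegaHat ω (dyadicRadius (n + m)) := ih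
      _ ≤ C ^ m * (C * omegaHat ω (dyadicRadius (n + m + 1))) := by
        rw [dyadicRadius_succ]
        exact mul_le_mul_of_nonneg_left (hD _ (dyadicRadius_mem_Ico _)) (pow_nonneg hC m)
      _ = C ^ (m + 1) * omegaHat ω (dyadicRadius (n + (m + 1))) := by ring_nf

namespace IsRadialWeight

section Moments

variable {ω : ℝ → ℝ} (hω : IsRadialWeight ω)
include hω

theorem intervalIntegrable_rpow_mul {x a b : ℝ} (hx : 0 ≤ x) (ha : a ∈ Icc (0:ℝ) 1)
    (hb : b ∈ Icc (0:ℝ) 1) : IntervalIntegrable (fun r ↦ r ^ x * ω r) volume a b := by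
  have hint := ((integrableOn_Icc_iff_integrableOn_Ico).2 hω.2).continuousOn_mul
    (continuousOn_id.rpow_const fun _ _ ↦ Or.inr hx) isCompact_Icc
  exact (hint.mono_set (uIcc_subset_Icc ha hb)).intervalIntegrable

theorem integral_rpow_mul_le {x a b : ℝ} (hx : 0 ≤ x) (ha : 0 ≤ a) (hab : a ≤ b) (hb : b ≤ 1) :
    ∫ r in a..b, r ^ x * ω r ≤ b ^ x * omegaHat ω a := by
  have ha' : a ∈ Icc (0:ℝ) 1 := ⟨ha, hab.trans hb⟩
  have hb' : b ∈ Icc (0:ℝ) 1 := ⟨ha.trans hab, hb⟩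
  calc ∫ r in a..b, r ^ x * ω r ≤ ∫ r in a..b, b ^ x * ω r := by
        refine intervalIntegral.integral_mono_ae_restrict hab
          (hω.intervalIntegrable_rpow_mul hx ha' hb') ((hω.intervalIntegrable ha' hb').const_mul _)
          ((ae_restrict_iff' measurableSet_Icc).2 (hω.ae_nonneg.mono fun r hr hmem ↦ ?_))
        exact mul_le_mul_of_nonneg_right (Real.rpow_le_rpow (ha.trans hmem.1) hmem.2 hx)
          (hr ⟨ha.trans hmem.1, hmem.2.trans hb⟩)
    _ = b ^ x * (omegaHat ω a - omegaHat ω b) := by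
        rw [intervalIntegral.integral_const_mul, hω.omegaHat_sub_omegaHat ha' hb']
    _ ≤ b ^ x * omegaHat ω a := by
        have := hω.omegaHat_nonneg hb'
        have := Real.rpow_nonneg hb'.1 x
        nlinarith

theorem rpow_mul_omegaHat_le_momentW {x a : ℝ} (hx : 0 ≤ x) (ha : a ∈ Icc (0:ℝ) 1) :
    a ^ x * omegaHat ω a ≤ momentW ω x := by
  have h0 : (0:ℝ) ∈ Icc (0:ℝ) 1 := ⟨le_rfl, zero_le_one⟩
  have h1 : (1:ℝ) ∈ Icc (0:ℝ) 1 := ⟨zero_le_one, le_rfl⟩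
  have hhead : 0 ≤ ∫ r in (0:ℝ)..a, r ^ x * ω r :=
    intervalIntegral.integral_nonneg_of_ae_restrict ha.1 <|
      (ae_restrict_iff' measurableSet_Icc).2 <| hω.ae_nonneg.mono fun r hr hmem ↦
        mul_nonneg (Real.rpow_nonneg hmem.1 x) (hr ⟨hmem.1, hmem.2.trans ha.2⟩)
  have htail : a ^ x * omegaHat ω a ≤ ∫ r in a..1, r ^ x * ω r := by
    rw [omegaHat, ← intervalIntegral.integral_const_mul]
    refine intervalIntegral.integral_mono_ae_restrict ha.2
      ((hω.intervalIntegrable ha h1).const_mul _) (hω.intervalIntegrable_rpow_mul hx ha h1)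
      ((ae_restrict_iff' measurableSet_Icc).2 (hω.ae_nonneg.mono fun r hr hmem ↦ ?_))
    exact mul_le_mul_of_nonneg_right (Real.rpow_le_rpow ha.1 hmem.1 hx)
      (hr ⟨ha.1.trans hmem.1, hmem.2⟩)
  rw [momentW, ← intervalIntegral.integral_add_adjacent_intervals
    (hω.intervalIntegrable_rpow_mul hx h0 ha) (hω.intervalIntegrable_rpow_mul hx ha h1)]
  linarith

variable {C : ℝ} (hC : 0 < C)
  (hD : ∀ r ∈ Ico (0:ℝ) 1, omegaHat ω r ≤ C * omegaHat ω ((1 + r) / 2))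
include hC hD

theorem integral_rpow_mul_dyadic_le {x : ℝ} (hx : 0 ≤ x) {k n : ℕ} (hk : 2 ^ k ≤ 4 * x)
    (hn : n < k) :
    ∫ r in dyadicRadius n..dyadicRadius (n + 1), r ^ x * ω r ≤
      Real.exp (4 * Real.log (2 * C) ^ 2) * (1 / 2) ^ (k - n) * omegaHat ω (dyadicRadius k) := by
  have hdecay : dyadicRadius (n + 1) ^ x ≤ Real.exp (-2 ^ (k - n) / 8) := by
    refine (Real.one_sub_rpow_le_exp (pow_le_one₀ (by norm_num) (by norm_num)) hx).trans
      (Real.exp_le_exp.2 ?_)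
    have h2 : (2:ℝ) ^ (k - n) * 2 ^ (n + 1) = 2 * 2 ^ k := by
      rw [← pow_add, ← pow_succ']; congr 1; omega
    rw [neg_div, neg_le_neg_iff, div_pow, one_pow, div_mul_eq_mul_div, one_mul,
      div_le_div_iff₀ (by norm_num) (by positivity)]
    nlinarith
  have hgrow := omegaHat_dyadicRadius_le hC.le hD n (k - n)
  rw [Nat.add_sub_cancel' hn.le] at hgrow
  have hmem := fun m ↦ Ico_subset_Icc_self (dyadicRadius_mem_Ico m)
  calc ∫ r in dyadicRadius n..dyadicRadius (n + 1), r ^ x * ω r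
      ≤ dyadicRadius (n + 1) ^ x * omegaHat ω (dyadicRadius n) :=
        hω.integral_rpow_mul_le hx (hmem n).1 (dyadicRadius_mono n.le_succ) (hmem _).2
    _ ≤ Real.exp (-2 ^ (k - n) / 8) * (C ^ (k - n) * omegaHat ω (dyadicRadius k)) :=
        mul_le_mul hdecay hgrow (hω.omegaHat_nonneg (hmem n)) (Real.exp_pos _).le
    _ = C ^ (k - n) * Real.exp (-2 ^ (k - n) / 8) * omegaHat ω (dyadicRadius k) := by ring
    _ ≤ _ := mul_le_mul_of_nonneg_right (Real.pow_mul_exp_neg_two_pow_le hC _)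
        (hω.omegaHat_nonneg (hmem k))

theorem momentW_le_mul_omegaHat_dyadicRadius {x : ℝ} (hx : 0 ≤ x) {k : ℕ} (hk : 2 ^ k ≤ 4 * x) :
    momentW ω x ≤ (Real.exp (4 * Real.log (2 * C) ^ 2) + 1) * omegaHat ω (dyadicRadius k) := by
  set E := Real.exp (4 * Real.log (2 * C) ^ 2)
  have hmem := fun m ↦ Ico_subset_Icc_self (dyadicRadius_mem_Ico m)
  have h1 : (1:ℝ) ∈ Icc (0:ℝ) 1 := ⟨zero_le_one, le_rfl⟩
  have hsplit : momentW ω x = ∑ n ∈ Finset.range k,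
      (∫ r in dyadicRadius n..dyadicRadius (n + 1), r ^ x * ω r) +
        ∫ r in dyadicRadius k..1, r ^ x * ω r := by
    have hsum := intervalIntegral.sum_integral_adjacent_intervals (n := k)
      fun n _ ↦ hω.intervalIntegrable_rpow_mul hx (hmem n) (hmem (n + 1))
    rw [dyadicRadius_zero] at hsum
    rw [hsum, intervalIntegral.integral_add_adjacent_intervals
      (hω.intervalIntegrable_rpow_mul hx ⟨le_rfl, zero_le_one⟩ (hmem k))
      (hω.intervalIntegrable_rpow_mul hx (hmem k) h1), momentW]
  have htail : ∫ r in dyadicRadius k..1, r ^ x * ω r ≤ omegaHat ω (dyadicRadius k) := by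
    simpa using hω.integral_rpow_mul_le hx (hmem k).1 (hmem k).2 le_rfl
  have hgeom := sum_range_half_pow_sub_le_one k
  have hhat := hω.omegaHat_nonneg (hmem k)
  calc momentW ω x ≤ ∑ n ∈ Finset.range k, E * (1 / 2) ^ (k - n) * omegaHat ω (dyadicRadius k) +
        omegaHat ω (dyadicRadius k) := by
        rw [hsplit]
        gcongr with n hn
        exact hω.integral_rpow_mul_dyadic_le hC hD hx hk (Finset.mem_range.1 hn)
    _ ≤ (E + 1) * omegaHat ω (dyadicRadius k) := by
        rw [← Finset.sum_mul, ← Finset.mul_sum]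
        nlinarith [mul_le_mul_of_nonneg_right
          (mul_le_mul_of_nonneg_left hgeom (Real.exp_pos (4 * Real.log (2 * C) ^ 2)).le) hhat]

end Moments

theorem exists_momentW_comparable {ω : ℝ → ℝ} (hω : IsRadialWeight ω) (hD : InDhat ω) :
    ∃ A : ℝ, 1 ≤ A ∧ ∀ x : ℝ, 1 ≤ x → ∀ k : ℕ, 2 * x ≤ 2 ^ k → 2 ^ k ≤ 4 * x →
      omegaHat ω (dyadicRadius k) ≤ A * momentW ω x ∧
        momentW ω x ≤ A * omegaHat ω (dyadicRadius k) := by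
  obtain ⟨C, hC, hDC⟩ := hD
  set E := Real.exp (4 * Real.log (2 * C) ^ 2)
  have hE : 0 < E := Real.exp_pos _
  refine ⟨E + 2, by linarith, fun x hx k hk₁ hk₂ ↦ ⟨?_, ?_⟩⟩
  · have hmem := Ico_subset_Icc_self (dyadicRadius_mem_Ico k)
    have hlow := hω.rpow_mul_omegaHat_le_momentW (x := x) (by linarith) hmem
    have hhalf := mul_le_mul_of_nonneg_right (half_le_dyadicRadius_rpow hx hk₁)
      (hω.omegaHat_nonneg hmem)
    have hmom : 0 ≤ momentW ω x :=
      (mul_nonneg (Real.rpow_nonneg hmem.1 x) (hω.omegaHat_nonneg hmem)).trans hlow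
    nlinarith
  · have hhat := hω.omegaHat_nonneg (Ico_subset_Icc_self (dyadicRadius_mem_Ico k))
    linarith [hω.momentW_le_mul_omegaHat_dyadicRadius hC hDC (by linarith) hk₂]

end IsRadialWeight

/-- For `ω ∈ D̂` and `α>0`, `μ = ω ω̂^{α-1}` is a radial weight in `D̂`
and `μ_x ≍ (ω_x)^α` for `x ≥ 1`. -/
theorem weight_power_in_Dhat
    (ω : ℝ → ℝ) (hω : IsRadialWeight ω)
    (hpos : ∀ r ∈ Set.Ico (0:ℝ) 1, 0 < omegaHat ω r)
    (hD : InDhat ω)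
    (α : ℝ) (hα : 0 < α)
    (μ : ℝ → ℝ) (hμ : μ = fun r => ω r * omegaHat ω r ^ (α - 1)) :
    IsRadialWeight μ ∧ InDhat μ ∧
      ∃ C : ℝ, 1 ≤ C ∧ ∀ x : ℝ, 1 ≤ x →
        C⁻¹ * momentW ω x ^ α ≤ momentW μ x ∧ momentW μ x ≤ C * momentW ω x ^ α := by
  subst hμ
  have hhat := fun r (hr : r ∈ Ico (0:ℝ) 1) ↦ hω.omegaHat_mul_omegaHat_rpow hpos hα hr
  have hμ : IsRadialWeight fun r ↦ ω r * omegaHat ω r ^ (α - 1) :=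
    ⟨fun r hr ↦ mul_nonneg (hω.1 r hr) (Real.rpow_nonneg (hpos r hr).le _),
      hω.integrableOn_mul_omegaHat_rpow hpos hα⟩
  have hμD := hD.of_omegaHat_eq_rpow_div hα (fun r hr ↦ (hpos r hr).le) hhat
  obtain ⟨A, hA, hωA⟩ := hω.exists_momentW_comparable hD
  obtain ⟨B, hB, hμB⟩ := hμ.exists_momentW_comparable hμD
  obtain ⟨C, hC, hcomp⟩ := exists_comparable_rpow hα hA hB
  refine ⟨hμ, hμD, C, hC, fun x hx ↦ ?_⟩
  obtain ⟨k, hk₁, hk₂⟩ := exists_two_pow_mem_Icc hx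
  obtain ⟨hω₁, hω₂⟩ := hωA x hx k hk₁ hk₂
  obtain ⟨hμ₁, hμ₂⟩ := hμB x hx k hk₁ hk₂
  rw [hhat _ (dyadicRadius_mem_Ico k)] at hμ₁ hμ₂
  exact hcomp _ _ _ (hpos _ (dyadicRadius_mem_Ico k)).le hω₁ hω₂ hμ₁ hμ₂
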